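/- If F' ≤ F are two edge-weight functions on a finite connected graph G, then F' is a separation of F if and only if for all pairs of distinct regional minima X, Y of F, the connection values satisfy F'(X,Y) = F(X,Y). -/

import Mathlib

open SimpleGraph

variable {V : Type*} [Fintype V] [DecidableEq V]

/-- The subgraph of `G` induced by a set `S` of edges: its edges are the edges of `G`
belonging to `S`, and its vertices are the endpoints of those edges. -/
def edgeInduced (G : SimpleGraph V) (S : Set (Sym2 V)) : G.Subgraph where
  verts := {x | ∃ y, G.Adj x y ∧ s(x, y) ∈ S}
  Adj x y := G.Adj x y ∧ s(x, y) ∈ S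
  adj_sub h := h.1
  edge_vert h := ⟨_, h⟩
  symm := ⟨fun x y h => ⟨h.1.symm, by rw [Sym2.eq_swap]; exact h.2⟩⟩

/-- The edge-closing `φ`: `φ(X)` has the same vertices as `X` and all edges of `G`
with both endpoints in `X`. -/
def phi (G : SimpleGraph V) (X : G.Subgraph) : G.Subgraph where
  verts := X.verts
  Adj x y := G.Adj x y ∧ x ∈ X.verts ∧ y ∈ X.verts
  adj_sub h := h.1
  edge_vert h := h.2.1
  symm := ⟨fun x y h => ⟨h.1.symm, h.2.2, h.2.1⟩⟩

/-- The connected component of the subgraph `S` containing the vertex `x`. -/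
def compOf (G : SimpleGraph V) (S : G.Subgraph) (x : V) : G.Subgraph where
  verts := {y ∈ S.verts | S.spanningCoe.Reachable x y}
  Adj a b := S.Adj a b ∧ S.spanningCoe.Reachable x a
  adj_sub h := S.adj_sub h.1
  edge_vert h := ⟨S.edge_vert h.1, h.2⟩
  symm := ⟨fun a b h => ⟨h.1.symm, h.2.trans (SimpleGraph.Adj.reachable (by exact h.1))⟩⟩

/-- A set `C` of edges of `G` is a cut if every edge of `C` joins two distinct
nonempty connected components of the graph induced by the complementary edges. -/
def IsCut (G : SimpleGraph V) (C : Set (Sym2 V)) : Prop :=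
  ∀ x y, G.Adj x y → s(x, y) ∈ C →
    x ∈ (edgeInduced G (G.edgeSet \ C)).verts ∧
    y ∈ (edgeInduced G (G.edgeSet \ C)).verts ∧
    ¬ (edgeInduced G (G.edgeSet \ C)).spanningCoe.Reachable x y

/-- A subgraph `S` of `G` is a segmentation if the complement of its edge set is a cut. -/
def IsSegmentation (G : SimpleGraph V) (S : G.Subgraph) : Prop :=
  IsCut G (G.edgeSet \ S.edgeSet)

/-- Number of connected components of a subgraph. -/
noncomputable def numComp (G : SimpleGraph V) (S : G.Subgraph) : ℕ :=
  Nat.card S.coe.ConnectedComponent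

/-- Adding the edge `{x, y}` (and its endpoints) to the subgraph `X`. -/
def addEdge (G : SimpleGraph V) (X : G.Subgraph) {x y : V} (h : G.Adj x y) : G.Subgraph where
  verts := X.verts ∪ {x, y}
  Adj a b := X.Adj a b ∨ s(a, b) = s(x, y)
  adj_sub := by
    rintro a b (hab | hab)
    · exact X.adj_sub hab
    · rcases Sym2.eq_iff.mp hab with ⟨rfl, rfl⟩ | ⟨rfl, rfl⟩
      · exact h
      · exact h.symm
  edge_vert := by
    rintro a b (hab | hab)
    · exact Or.inl (X.edge_vert hab)
    · rcases Sym2.eq_iff.mp hab with ⟨rfl, rfl⟩ | ⟨rfl, rfl⟩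
      · exact Or.inr (by simp)
      · exact Or.inr (by simp)
  symm := by
    constructor
    rintro a b (hab | hab)
    · exact Or.inl hab.symm
    · right; rwa [Sym2.eq_swap]

/-- The edge `{x, y}` is W-simple for `X` if adding it does not change the number
of connected components. -/
def WSimple (G : SimpleGraph V) (X : G.Subgraph) {x y : V} (h : G.Adj x y) : Prop :=
  numComp G (addEdge G X h) = numComp G X

/-- `X` is a binary watershed of `G` if no edge outside of `X` is W-simple for `X`. -/
def BinaryWatershed (G : SimpleGraph V) (X : G.Subgraph) : Prop :=
  ∀ x y (h : G.Adj x y), s(x, y) ∉ X.edgeSet → ¬ WSimple G X h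

/-- The cross-section `F[l]`: the subgraph induced by the edges of weight at most `l`. -/
def levelSub (G : SimpleGraph V) (F : Sym2 V → NNReal) (l : NNReal) : G.Subgraph :=
  edgeInduced G {e | F e ≤ l}

/-- The connection value between `x` and `y`: the least level `l` such that `x` and `y`
lie in the same connected component of `F[l]`. -/
noncomputable def connVal (G : SimpleGraph V) (F : Sym2 V → NNReal) (x y : V) : NNReal :=
  sInf {l | (levelSub G F l).spanningCoe.Reachable x y}

/-- The edge `{x, y}` is W-destructible for `F` with lowest value `l0`. -/
def WDestructible (G : SimpleGraph V) (F : Sym2 V → NNReal) {x y : V} (h : G.Adj x y)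
    (l0 : NNReal) : Prop :=
  (∀ l1, l0 < l1 → l1 ≤ F s(x, y) → WSimple G (levelSub G F l1) h) ∧
    ¬ WSimple G (levelSub G F l0) h

/-- `F` is a topological watershed if it has no W-destructible edge. -/
def TopologicalWatershed (G : SimpleGraph V) (F : Sym2 V → NNReal) : Prop :=
  ∀ x y (h : G.Adj x y) (l0 : NNReal), ¬ WDestructible G F h l0

/-- A regional minimum of `F`: a connected component `X` of some cross-section `F[l]`
containing no edge of weight `< l`. -/
def IsMinimum (G : SimpleGraph V) (F : Sym2 V → NNReal) (X : G.Subgraph) : Prop :=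
  ∃ (l : NNReal) (x : V), x ∈ (levelSub G F l).verts ∧ X = compOf G (levelSub G F l) x ∧
    ∀ l1 < l, ∀ e ∈ X.edgeSet, ¬ F e ≤ l1

/-- The graph `M(F)`, union of all the regional minima of `F`. -/
def minimaGraph (G : SimpleGraph V) (F : Sym2 V → NNReal) : G.Subgraph where
  verts := {x | ∃ X, IsMinimum G F X ∧ x ∈ X.verts}
  Adj a b := ∃ X, IsMinimum G F X ∧ X.Adj a b
  adj_sub := by rintro a b ⟨X, _, hab⟩; exact X.adj_sub hab
  edge_vert := by rintro a b ⟨X, hX, hab⟩; exact ⟨X, hX, X.edge_vert hab⟩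
  symm := by constructor; rintro a b ⟨X, hX, hab⟩; exact ⟨X, hX, hab.symm⟩

/-- Connection value between two subgraphs: `F(X,Y) = min {F(x,y) : x ∈ X, y ∈ Y}`. -/
noncomputable def connValSub (G : SimpleGraph V) (F : Sym2 V → NNReal)
    (X Y : G.Subgraph) : NNReal :=
  sInf {l | ∃ x ∈ X.verts, ∃ y ∈ Y.verts, connVal G F x y = l}

/-- An ultrametric watershed: a topological watershed which is null on all its minima. -/
def UltrametricWatershed (G : SimpleGraph V) (F : Sym2 V → NNReal) : Prop :=
  TopologicalWatershed G F ∧ ∀ X, IsMinimum G F X → ∀ e ∈ X.edgeSet, F e = 0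

/-- The regions of a segmentation `S`: its connected components. -/
def Regions (G : SimpleGraph V) (S : G.Subgraph) : Set G.Subgraph :=
  {X | ∃ x ∈ S.verts, X = compOf G S x}

/-- A hierarchical segmentation on `G`: an indexed hierarchy `(H, μ)` on the set of
regions of a segmentation `S` of `G` such that the edge-closing of the union of the
regions of each member of the hierarchy is connected. -/
structure HierSeg {V : Type*} [Fintype V] [DecidableEq V] (G : SimpleGraph V) where
  S : G.Subgraph
  seg : IsSegmentation G S
  H : Set (Set G.Subgraph)
  hsub : ∀ h ∈ H, h ⊆ Regions G S
  htop : Regions G S ∈ H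
  hsing : ∀ X ∈ Regions G S, {X} ∈ H
  hnest : ∀ h ∈ H, ∀ h' ∈ H, (h ∩ h').Nonempty → h ⊆ h' ∨ h' ⊆ h
  mu : Set G.Subgraph → NNReal
  mu_zero : ∀ h ∈ H, (mu h = 0 ↔ ∃ X, h = {X})
  mu_mono : ∀ h ∈ H, ∀ h' ∈ H, h ⊂ h' → mu h < mu h'
  mu_out : ∀ h ∉ H, mu h = 0
  hconn : ∀ h ∈ H, (phi G (sSup h)).Connected

/-- `H[l]`: the graph induced by the (edge-closed unions of regions of the) members
of the hierarchy at level at most `l`. -/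
def HLevel (G : SimpleGraph V) (HS : HierSeg G) (l : NNReal) : G.Subgraph :=
  sSup {K | ∃ h ∈ HS.H, HS.mu h ≤ l ∧ K = phi G (sSup h)}

/-- The saliency map of a hierarchical segmentation. -/
noncomputable def saliencyMap (G : SimpleGraph V) (HS : HierSeg G) : Sym2 V → NNReal :=
  fun e => sInf {l | e ∈ (HLevel G HS l).edgeSet}

/-- The ultrametric opening `Ψ`. -/
noncomputable def psi (G : SimpleGraph V) (F : Sym2 V → NNReal) : Sym2 V → NNReal :=
  Sym2.lift ⟨fun x y => connVal G F x y, fun x y => by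
    have hs : {l | (levelSub G F l).spanningCoe.Reachable x y} =
        {l | (levelSub G F l).spanningCoe.Reachable y x} := by
      ext l
      exact ⟨fun hr => hr.symm, fun hr => hr.symm⟩
    show sInf _ = sInf _
    rw [hs]⟩

/-- Altitude of the lowest component of `F` containing `x`. -/
noncomputable def vertAlt (G : SimpleGraph V) (F : Sym2 V → NNReal) (x : V) : NNReal :=
  sInf {l | x ∈ (levelSub G F l).verts}

/-- `x` and `y` are `l`-separated for `F`. -/
def SeparatedAt (G : SimpleGraph V) (F : Sym2 V → NNReal) (x y : V) (l : NNReal) : Prop :=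
  connVal G F x y = l ∧ max (vertAlt G F x) (vertAlt G F y) < l

/-- `F'` is a separation of `F`. -/
def IsSeparation (G : SimpleGraph V) (F F' : Sym2 V → NNReal) : Prop :=
  ∀ x y l, SeparatedAt G F x y l → SeparatedAt G F' x y l

/-- `C` is a connected component of the cross-section `F[l]`. -/
def IsCompAt (G : SimpleGraph V) (F : Sym2 V → NNReal) (l : NNReal) (C : G.Subgraph) : Prop :=
  ∃ x ∈ (levelSub G F l).verts, C = compOf G (levelSub G F l) x

/-- `h(C)`: the smallest level at which `C` is a component of `F`. -/
noncomputable def hVal (G : SimpleGraph V) (F : Sym2 V → NNReal) (C : G.Subgraph) : NNReal :=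
  sInf {l | IsCompAt G F l C}

/-!
The connection value `F(x, y)` is an ultrametric on the vertices, and the infimum defining it
is attained because `F` takes finitely many values. A regional minimum `X` sits at the level
`vertAlt F m` of each of its vertices `m` and is a full component of that cross-section, so
`F(m, p) > vertAlt F m` for every `p ∉ X`. Hence for distinct minima `X`, `Y` every pair
`m ∈ X`, `m' ∈ Y` is `F(m, m')`-separated, and `F(m, m')` does not depend on the pair: it is
`F(X, Y)`. Conversely, if `x`, `y` are `λ`-separated for `F`, descending from `x` and `y` to the
lowest edge of their components gives minima `X ∋ m`, `Y ∋ m'` with `F(x, m), F(y, m') < λ`,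
so `F(X, Y) = F(m, m') = λ` by the ultrametric inequality; then `F'(X, Y) = λ` and `F' ≤ F`
force `F'(x, y) = λ`.
-/

open Filter Topology

theorem sInf_mem_of_sublevel_mono {ι : Type*} [Finite ι] (F : ι → NNReal) {S : Set NNReal}
    (hS : S.Nonempty) (hmono : ∀ l l', (∀ i, F i ≤ l → F i ≤ l') → l ∈ S → l' ∈ S) :
    sInf S ∈ S := by
  set s := sInf S
  -- `F` takes no value in `(s, l]` for `l` close enough to `s`
  have hgap : ∀ᶠ l in 𝓝[>] s, ∀ i, F i ≤ l → F i ≤ s := by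
    rw [eventually_all]
    intro i
    rcases le_or_gt (F i) s with h | h
    · exact Eventually.of_forall fun _ _ => h
    · filter_upwards [Ioo_mem_nhdsGT h] with l hl hil
      exact absurd hil (not_le.mpr hl.2)
  have habove : ∀ᶠ l in 𝓝[>] s, l ∈ S := by
    filter_upwards [self_mem_nhdsWithin] with l (hl : s < l)
    obtain ⟨t, ht, htl⟩ := exists_lt_of_csInf_lt hS hl
    exact hmono t l (fun i hi => hi.trans htl.le) ht
  obtain ⟨l, hl_gap, hl⟩ := (hgap.and habove).exists
  exact hmono l s hl_gap hl

theorem SimpleGraph.Subgraph.mem_verts_of_reachable {α : Type*} {G : SimpleGraph α}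
    {H : G.Subgraph} {x y : α} (h : H.spanningCoe.Reachable x y) (hx : x ∈ H.verts) :
    y ∈ H.verts := by
  obtain ⟨w⟩ := h
  induction w with
  | nil => exact hx
  | cons hadj _ ih => exact ih (H.edge_vert hadj.symm)

section

variable {α : Type*} {G : SimpleGraph α} {F F' : Sym2 α → NNReal} {X Y : G.Subgraph}

theorem levelSub_le_levelSub {l l' : NNReal} (h : ∀ e, F e ≤ l → F' e ≤ l') :
    levelSub G F l ≤ levelSub G F' l' :=
  ⟨fun _ ⟨z, hz, he⟩ => ⟨z, hz, h _ he⟩, fun _ _ ⟨hab, he⟩ => ⟨hab, h _ he⟩⟩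

theorem SimpleGraph.Reachable.levelSub_mono {l l' : NNReal} (h : ∀ e, F e ≤ l → F' e ≤ l')
    {x y : α} (hr : (levelSub G F l).spanningCoe.Reachable x y) :
    (levelSub G F' l').spanningCoe.Reachable x y :=
  hr.mono fun _ _ hab => (levelSub_le_levelSub h).2 hab

theorem compOf_mono {S S' : G.Subgraph} (h : S ≤ S') (x : α) : compOf G S x ≤ compOf G S' x :=
  ⟨fun _ ⟨ha, hr⟩ => ⟨h.1 ha, hr.mono fun _ _ hab => h.2 hab⟩,
    fun _ _ ⟨hab, hr⟩ => ⟨h.2 hab, hr.mono fun _ _ hab => h.2 hab⟩⟩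

theorem compOf_eq_of_mem {S : G.Subgraph} {x z : α} (hz : z ∈ (compOf G S x).verts) :
    compOf G S z = compOf G S x := by
  have hzx := hz.2
  refine Subgraph.ext ?_ ?_
  · ext a
    exact and_congr_right fun _ => ⟨hzx.trans, hzx.symm.trans⟩
  · ext a b
    exact and_congr_right fun _ => ⟨hzx.trans, hzx.symm.trans⟩

theorem connVal_le_of_reachable {x y : α} {l : NNReal}
    (h : (levelSub G F l).spanningCoe.Reachable x y) : connVal G F x y ≤ l :=
  csInf_le (OrderBot.bddBelow _) h

theorem connVal_comm (x y : α) : connVal G F x y = connVal G F y x := by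
  simp only [connVal, reachable_comm]

theorem connVal_self (x : α) : connVal G F x x = 0 :=
  nonpos_iff_eq_zero.mp (connVal_le_of_reachable (Reachable.refl x))

theorem vertAlt_le {x : α} {l : NNReal} (h : x ∈ (levelSub G F l).verts) : vertAlt G F x ≤ l :=
  csInf_le (OrderBot.bddBelow _) h

theorem vertAlt_eq_of_mem_compOf {l : NNReal} {x₀ m : α}
    (hmin : ∀ l₁ < l, ∀ e ∈ (compOf G (levelSub G F l) x₀).edgeSet, ¬ F e ≤ l₁)
    (hm : m ∈ (compOf G (levelSub G F l) x₀).verts) : vertAlt G F m = l := by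
  refine le_antisymm (vertAlt_le hm.1) (le_csInf ⟨l, hm.1⟩ ?_)
  rintro l' ⟨w, hw, hFw⟩
  by_contra! hlow
  have hFl := hFw.trans_lt hlow
  exact hmin _ hFl s(m, w) ⟨⟨hw, hFl.le⟩, hm.2⟩ le_rfl

theorem IsMinimum.eq_of_mem (hX : IsMinimum G F X) (hY : IsMinimum G F Y) {z : α}
    (hzX : z ∈ X.verts) (hzY : z ∈ Y.verts) : X = Y := by
  obtain ⟨l, x₀, -, rfl, hminX⟩ := hX
  obtain ⟨l', y₀, -, rfl, hminY⟩ := hY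
  obtain rfl : l = l' :=
    (vertAlt_eq_of_mem_compOf hminX hzX).symm.trans (vertAlt_eq_of_mem_compOf hminY hzY)
  rw [← compOf_eq_of_mem hzX, compOf_eq_of_mem hzY]

theorem IsMinimum.notMem_of_ne (hX : IsMinimum G F X) (hY : IsMinimum G F Y) (hXY : X ≠ Y)
    {z : α} (hzY : z ∈ Y.verts) : z ∉ X.verts :=
  fun hzX => hXY (hX.eq_of_mem hY hzX hzY)

theorem IsMinimum.connVal_le_vertAlt (hX : IsMinimum G F X) {m p : α} (hm : m ∈ X.verts)
    (hp : p ∈ X.verts) : connVal G F m p ≤ vertAlt G F m := by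
  obtain ⟨l, x₀, -, rfl, hmin⟩ := hX
  rw [vertAlt_eq_of_mem_compOf hmin hm]
  exact connVal_le_of_reachable (hm.2.symm.trans hp.2)

variable [Finite α]

theorem reachable_connVal (hG : G.Connected) (x y : α) :
    (levelSub G F (connVal G F x y)).spanningCoe.Reachable x y := by
  obtain ⟨L, hL⟩ := (Set.finite_range F).bddAbove
  have hreach : (levelSub G F L).spanningCoe.Reachable x y :=
    (hG.preconnected x y).mono fun _ _ hab => ⟨hab, hL ⟨_, rfl⟩⟩
  exact sInf_mem_of_sublevel_mono F (S := {l | (levelSub G F l).spanningCoe.Reachable x y})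
    ⟨L, hreach⟩ fun _ _ h hr => hr.levelSub_mono h

theorem connVal_le_iff (hG : G.Connected) {x y : α} {l : NNReal} :
    connVal G F x y ≤ l ↔ (levelSub G F l).spanningCoe.Reachable x y :=
  ⟨fun h => (reachable_connVal hG x y).levelSub_mono fun _ he => he.trans h,
    connVal_le_of_reachable⟩

theorem connVal_le_max (hG : G.Connected) (x y z : α) :
    connVal G F x z ≤ max (connVal G F x y) (connVal G F y z) :=
  (connVal_le_iff hG).mpr <| ((connVal_le_iff hG).mp (le_max_left _ _)).trans
    ((connVal_le_iff hG).mp (le_max_right _ _))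

theorem connVal_eq_of_lt (hG : G.Connected) {x y z : α} (h : connVal G F x z < connVal G F x y) :
    connVal G F z y = connVal G F x y :=
  le_antisymm ((connVal_le_max hG z x y).trans (max_le ((connVal_comm z x).trans_le h.le) le_rfl))
    ((le_max_iff.mp (connVal_le_max hG x z y)).resolve_left h.not_ge)

theorem connVal_anti (hG : G.Connected) (hle : ∀ e, F' e ≤ F e) (x y : α) :
    connVal G F' x y ≤ connVal G F x y :=
  connVal_le_of_reachable <| (reachable_connVal hG x y).levelSub_mono fun e he => (hle e).trans he

theorem mem_levelSub_vertAlt {x z : α} (hz : G.Adj x z) :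
    x ∈ (levelSub G F (vertAlt G F x)).verts :=
  sInf_mem_of_sublevel_mono F (S := {l | x ∈ (levelSub G F l).verts})
    ⟨F s(x, z), z, hz, (le_rfl : F s(x, z) ≤ _)⟩
    fun _ _ h hx => (levelSub_le_levelSub h).1 hx

theorem vertAlt_anti (hle : ∀ e, F' e ≤ F e) (x : α) : vertAlt G F' x ≤ vertAlt G F x := by
  by_cases hx : ∃ z, G.Adj x z
  · obtain ⟨z, hz⟩ := hx
    exact vertAlt_le <| (levelSub_le_levelSub fun e he => (hle e).trans he).1 <|
      mem_levelSub_vertAlt hz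
  · have hempty : {l | x ∈ (levelSub G F' l).verts} = ∅ :=
      Set.eq_empty_of_forall_notMem fun _ ⟨z, hz, _⟩ => hx ⟨z, hz⟩
    simp only [vertAlt, hempty, NNReal.sInf_empty, zero_le]

theorem IsMinimum.vertAlt_lt_connVal (hG : G.Connected) (hX : IsMinimum G F X) {m p : α}
    (hm : m ∈ X.verts) (hp : p ∉ X.verts) : vertAlt G F m < connVal G F m p := by
  obtain ⟨l, x₀, -, rfl, hmin⟩ := hX
  rw [vertAlt_eq_of_mem_compOf hmin hm]
  by_contra! h
  have hmp := (connVal_le_iff hG).mp h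
  exact hp ⟨Subgraph.mem_verts_of_reachable hmp hm.1, hm.2.trans hmp⟩

theorem IsMinimum.separatedAt (hG : G.Connected) (hX : IsMinimum G F X) (hY : IsMinimum G F Y)
    (hXY : X ≠ Y) {m m' : α} (hm : m ∈ X.verts) (hm' : m' ∈ Y.verts) :
    SeparatedAt G F m m' (connVal G F m m') := by
  refine ⟨rfl, max_lt (hX.vertAlt_lt_connVal hG hm (hX.notMem_of_ne hY hXY hm')) ?_⟩
  rw [connVal_comm]
  exact hY.vertAlt_lt_connVal hG hm' (hY.notMem_of_ne hX hXY.symm hm)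

theorem IsMinimum.connVal_eq (hG : G.Connected) (hX : IsMinimum G F X) (hY : IsMinimum G F Y)
    (hXY : X ≠ Y) {m p m' p' : α} (hm : m ∈ X.verts) (hp : p ∈ X.verts) (hm' : m' ∈ Y.verts)
    (hp' : p' ∈ Y.verts) : connVal G F p p' = connVal G F m m' := by
  have hpm' : connVal G F p m' = connVal G F m m' := connVal_eq_of_lt hG <|
    (hX.connVal_le_vertAlt hm hp).trans_lt
      (hX.vertAlt_lt_connVal hG hm (hX.notMem_of_ne hY hXY hm'))
  have hp'p : connVal G F p' p = connVal G F m' p := connVal_eq_of_lt hG <|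
    (hY.connVal_le_vertAlt hm' hp').trans_lt
      (hY.vertAlt_lt_connVal hG hm' (hY.notMem_of_ne hX hXY.symm hp))
  rw [connVal_comm, hp'p, connVal_comm, hpm']

theorem IsMinimum.connValSub_eq (hG : G.Connected) (hX : IsMinimum G F X)
    (hY : IsMinimum G F Y) (hXY : X ≠ Y) {m m' : α} (hm : m ∈ X.verts) (hm' : m' ∈ Y.verts) :
    connValSub G F X Y = connVal G F m m' := by
  have hvalues : {l | ∃ p ∈ X.verts, ∃ p' ∈ Y.verts, connVal G F p p' = l} =
      {connVal G F m m'} := by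
    ext l
    constructor
    · rintro ⟨p, hp, p', hp', rfl⟩
      exact hX.connVal_eq hG hY hXY hm hp hm' hp'
    · rintro rfl
      exact ⟨m, hm, m', hm', rfl⟩
  rw [connValSub, hvalues, csInf_singleton]

theorem exists_isMinimum_reachable {x : α} {l : NNReal} (hx : x ∈ (levelSub G F l).verts) :
    ∃ X, IsMinimum G F X ∧ ∃ m ∈ X.verts, (levelSub G F l).spanningCoe.Reachable x m := by
  set C := compOf G (levelSub G F l) x
  obtain ⟨w, hxw, hFxw⟩ := hx
  have hC : (F '' C.edgeSet).Nonempty := ⟨_, s(x, w), ⟨⟨hxw, hFxw⟩, Reachable.refl x⟩, rfl⟩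
  -- a lowest edge `s(a, b)` of `C`: the component of `a` at its weight is a regional minimum
  obtain ⟨e, heC, hFe⟩ := hC.csInf_mem (Set.toFinite _)
  set l₀ := sInf (F '' C.edgeSet)
  induction e using Sym2.ind with | _ a b => ?_
  obtain ⟨⟨hab, hFab⟩, hxa⟩ := heC
  have ha : a ∈ (levelSub G F l₀).verts := ⟨b, hab, hFe.le⟩
  refine ⟨compOf G (levelSub G F l₀) a, ⟨l₀, a, ha, rfl, ?_⟩, a, ⟨ha, Reachable.refl a⟩, hxa⟩
  intro l₁ hl₁ e he hFe₁
  have hsub : compOf G (levelSub G F l₀) a ≤ C := calc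
    _ ≤ compOf G (levelSub G F l) a :=
      compOf_mono (levelSub_le_levelSub fun _ he => he.trans (hFe ▸ hFab)) a
    _ = C := compOf_eq_of_mem ⟨⟨b, hab, hFab⟩, hxa⟩
  have hl₀ : l₀ ≤ F e := csInf_le (OrderBot.bddBelow _) ⟨e, Subgraph.edgeSet_mono hsub he, rfl⟩
  exact (hFe₁.trans_lt hl₁).not_ge hl₀

theorem exists_isMinimum_connVal_le {x z : α} (hz : G.Adj x z) :
    ∃ X, IsMinimum G F X ∧ ∃ m ∈ X.verts,
      connVal G F x m ≤ vertAlt G F x ∧ vertAlt G F m ≤ vertAlt G F x := by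
  have hx := mem_levelSub_vertAlt (F := F) hz
  obtain ⟨X, hX, m, hm, hxm⟩ := exists_isMinimum_reachable hx
  exact ⟨X, hX, m, hm, connVal_le_of_reachable hxm,
    vertAlt_le (Subgraph.mem_verts_of_reachable hxm hx)⟩

theorem SeparatedAt.exists_isMinimum (hG : G.Connected) {x y : α} {l : NNReal}
    (h : SeparatedAt G F x y l) :
    ∃ X Y, IsMinimum G F X ∧ IsMinimum G F Y ∧ X ≠ Y ∧ ∃ m ∈ X.verts, ∃ m' ∈ Y.verts,
      connVal G F x m < l ∧ connVal G F y m' < l ∧ connVal G F m m' = l := by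
  obtain ⟨hxy, hlt⟩ := h
  rw [max_lt_iff] at hlt
  have hne : x ≠ y := by
    rintro rfl
    rw [connVal_self] at hxy
    exact not_lt_zero (hxy ▸ hlt.1)
  have := nontrivial_of_ne x y hne
  obtain ⟨zx, hzx⟩ := hG.preconnected.exists_adj_of_nontrivial x
  obtain ⟨zy, hzy⟩ := hG.preconnected.exists_adj_of_nontrivial y
  obtain ⟨X, hX, m, hm, hxm, hmx⟩ := exists_isMinimum_connVal_le (F := F) hzx
  obtain ⟨Y, hY, m', hm', hym', -⟩ := exists_isMinimum_connVal_le (F := F) hzy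
  have hxm_lt : connVal G F x m < l := hxm.trans_lt hlt.1
  have hym'_lt : connVal G F y m' < l := hym'.trans_lt hlt.2
  have hmy : connVal G F m y = l := hxy ▸ connVal_eq_of_lt hG (hxy ▸ hxm_lt)
  have hm'm : connVal G F m' m = l := by
    rw [connVal_comm] at hmy
    exact hmy ▸ connVal_eq_of_lt hG (hmy ▸ hym'_lt)
  rw [connVal_comm] at hm'm
  have hXY : X ≠ Y := by
    rintro rfl
    exact ((hX.connVal_le_vertAlt hm hm').trans hmx).not_gt (hm'm ▸ hlt.1)
  exact ⟨X, Y, hX, hY, hXY, m, hm, m', hm', hxm_lt, hym'_lt, hm'm⟩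

theorem IsSeparation.connValSub_eq (hG : G.Connected) (hsep : IsSeparation G F F')
    (hX : IsMinimum G F X) (hY : IsMinimum G F Y) (hXY : X ≠ Y) :
    connValSub G F' X Y = connValSub G F X Y := by
  have hval : ∀ m ∈ X.verts, ∀ m' ∈ Y.verts, connVal G F' m m' = connVal G F m m' :=
    fun m hm m' hm' => (hsep m m' _ (hX.separatedAt hG hY hXY hm hm')).1
  simp only [connValSub]
  congr 1
  ext l
  constructor <;> rintro ⟨m, hm, m', hm', rfl⟩
  · exact ⟨m, hm, m', hm', (hval m hm m' hm').symm⟩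
  · exact ⟨m, hm, m', hm', hval m hm m' hm'⟩

theorem isSeparation_of_connValSub_eq (hG : G.Connected) (hle : ∀ e, F' e ≤ F e)
    (h : ∀ X Y : G.Subgraph, IsMinimum G F X → IsMinimum G F Y → X ≠ Y →
      connValSub G F' X Y = connValSub G F X Y) :
    IsSeparation G F F' := by
  intro x y l hsep
  obtain ⟨X, Y, hX, hY, hXY, m, hm, m', hm', hxm, hym', hmm'⟩ := hsep.exists_isMinimum hG
  have hl : l ≤ connVal G F' m m' := calc
    l = connValSub G F X Y := (hmm' ▸ hX.connValSub_eq hG hY hXY hm hm').symm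
    _ = connValSub G F' X Y := (h X Y hX hY hXY).symm
    _ ≤ connVal G F' m m' := csInf_le (OrderBot.bddBelow _) ⟨m, hm, m', hm', rfl⟩
  have hmx : connVal G F' m x < l := by
    rw [connVal_comm]
    exact (connVal_anti hG hle x m).trans_lt hxm
  have hym : connVal G F' y m' < l := (connVal_anti hG hle y m').trans_lt hym'
  have hxm' := (le_max_iff.mp (hl.trans (connVal_le_max hG m x m'))).resolve_left hmx.not_ge
  have hxy := (le_max_iff.mp (hxm'.trans (connVal_le_max hG x y m'))).resolve_right hym.not_ge
  refine ⟨le_antisymm ((connVal_anti hG hle x y).trans hsep.1.le) hxy, ?_⟩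
  exact (max_le_max (vertAlt_anti hle x) (vertAlt_anti hle y)).trans_lt hsep.2

end

theorem stmt16 (G : SimpleGraph V) (hG : G.Connected) (F F' : Sym2 V → NNReal)
    (hle : ∀ e, F' e ≤ F e) :
    IsSeparation G F F' ↔
      ∀ X Y : G.Subgraph, IsMinimum G F X → IsMinimum G F Y → X ≠ Y →
        connValSub G F' X Y = connValSub G F X Y :=
  ⟨fun hsep _ _ hX hY hXY => hsep.connValSub_eq hG hX hY hXY,
    isSeparation_of_connValSub_eq hG hle⟩
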